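/- arXiv:0907.5095 — 3 statements merged into one kernel-verified Lean document; each statement's English description precedes it below -/
import Mathlib

section
/- For a fixed odd prime p and q ∈ ℤ_p with |1-q|_p < 1, the assignment μ_q(a + p^N ℤ_p) = (1+q)(-q)^a / (1 + q^{p^N}) for 0 ≤ a ≤ p^N − 1 is finitely additive: for all N and 0 ≤ a < p^N, the sum over i = 0,...,p−1 of μ_q(a + i·p^N + p^{N+1} ℤ_p) equals μ_q(a + p^N ℤ_p). -/
open Filter Topology Finset

variable (p : ℕ) [Fact p.Prime]

/-- Riemann sums for the modified `q`-Euler numbers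
`E_{n,q} = ∫_{ℤ_p} ((1-q^x)/(1-q))^n q^{-x} dμ_q(x)`
(the factor `q^{-x}` cancels the `q^x` of the measure `(-q)^x`, leaving `(-1)^x`). -/
noncomputable def modEulerSum (q : ℚ_[p]) (n N : ℕ) : ℚ_[p] :=
  (1 + q) / (1 + q ^ p ^ N) *
    ∑ x ∈ range (p ^ N), ((1 - q ^ x) / (1 - q)) ^ n * (-1 : ℚ_[p]) ^ x

/-- The modified `q`-Euler numbers `E_{n,q}`, as the limit of the Riemann sums. -/
noncomputable def modEuler (q : ℚ_[p]) (n : ℕ) : ℚ_[p] :=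
  limUnder atTop (modEulerSum p q n)

/-- `q ^ x` for a `p`-adic integer exponent `x`, as the limit of `q ^ (x mod p^n)`. -/
noncomputable def qpowZ (q : ℚ_[p]) (x : ℤ_[p]) : ℚ_[p] :=
  limUnder atTop (fun n => q ^ x.appr n)

/-- `q ^ x` for a rational exponent `x` lying in `ℤ_p` (junk value `1` otherwise). -/
noncomputable def qpowQ (q : ℚ_[p]) (x : ℚ) : ℚ_[p] :=
  if h : ‖(x : ℚ_[p])‖ ≤ 1 then qpowZ p q ⟨(x : ℚ_[p]), h⟩ else 1

/-- The `q`-Euler polynomial `E_{m,q}(x) = ∫_{ℤ_p} q^{-t} ((1-q^{x+t})/(1-q))^m dμ_q(t)`,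
where `qx` stands for `q ^ x`. -/
noncomputable def qEulerPoly (q : ℚ_[p]) (m : ℕ) (qx : ℚ_[p]) : ℚ_[p] :=
  limUnder atTop (fun N => (1 + q) / (1 + q ^ p ^ N) *
    ∑ t ∈ range (p ^ N), (q ^ t)⁻¹ * ((1 - qx * q ^ t) / (1 - q)) ^ m * (-q) ^ t)

/-- The Teichmüller character: `ω(a) = lim_n a ^ (p ^ n)`. -/
noncomputable def teich (a : ℕ) : ℚ_[p] :=
  limUnder atTop (fun n => (a : ℚ_[p]) ^ p ^ n)

/-- `u ^ s` for a `p`-adic integer exponent `s`. -/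
noncomputable def padPow (u : ℚ_[p]) (s : ℤ_[p]) : ℚ_[p] :=
  limUnder atTop (fun n => u ^ s.appr n)

/-- The `p`-adic binomial coefficient `C(s, j) = s(s-1)⋯(s-j+1)/j!`. -/
noncomputable def cchoose (s : ℚ_[p]) (j : ℕ) : ℚ_[p] :=
  (∏ i ∈ range j, (s - (i : ℚ_[p]))) / (j.factorial : ℚ_[p])

/-- The `p`-adic interpolating function
`T_q(s, a, N : q^N) = ω(a)⁻¹ ⟨a⟩_q^s ∑_{j≥0} C(s,j) q^{aj} ((1-q^N)/(1-q^a))^j E_{j,q^N}`. -/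
noncomputable def Tq (q : ℚ_[p]) (s : ℤ_[p]) (a N : ℕ) : ℚ_[p] :=
  (teich p a)⁻¹ * padPow p ((teich p a)⁻¹ * ((1 - q ^ a) / (1 - q))) s *
    ∑' j : ℕ, cchoose p (s : ℚ_[p]) j * q ^ (a * j) *
      ((1 - q ^ N) / (1 - q ^ a)) ^ j * modEuler p (q ^ N) j

/-- The `q`-analogue of the higher order Dedekind type DC sums
`S_{m,q}(h, k : q^l) = ∑_{M=1}^{k-1} (-1)^{M-1} ((1-q^M)/(1-q^k)) E_{m,q^l}({hM/k})`. -/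
noncomputable def Smq (q : ℚ_[p]) (m h k l : ℕ) : ℚ_[p] :=
  ∑ M ∈ Ico 1 k, (-1 : ℚ_[p]) ^ (M - 1) * ((1 - q ^ M) / (1 - q ^ k)) *
    qEulerPoly p (q ^ l) m (qpowQ p q ((l : ℚ) * Int.fract ((h * M : ℚ) / k)))

/-- The `p`-adic Dedekind type DC sums
`S_{p,q}(s : h, k : q^k) = ∑_{M=1}^{k-1} ((1-q^M)/(1-q)) (-1)^{M-1} T_q(s, hM, k : q^k)`. -/
noncomputable def Spq (q : ℚ_[p]) (s : ℤ_[p]) (h k : ℕ) : ℚ_[p] :=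
  ∑ M ∈ Ico 1 k, ((1 - q ^ M) / (1 - q)) * (-1 : ℚ_[p]) ^ (M - 1) * Tq p q s (h * M) k

/-- The Euler polynomials, via the recurrence `∑_{k<n} C(n,k) E_k(x) + 2 E_n(x) = 2 x^n`. -/
noncomputable def eulerPoly (n : ℕ) (x : ℚ) : ℚ :=
  x ^ n - 1 / 2 * ∑ k ∈ (Finset.range n).attach, (n.choose k.1 : ℚ) * eulerPoly k.1 x
  termination_by n
  decreasing_by exact Finset.mem_range.mp k.2

/-- The periodic Euler function `Ē_m`, with `Ē_m(x) = E_m(x)` on `[0,1)` and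
`Ē_m(x+1) = -Ē_m(x)`. -/
noncomputable def periodicEuler (m : ℕ) (x : ℚ) : ℚ :=
  (-1 : ℚ) ^ ⌊x⌋ * eulerPoly m (Int.fract x)

/-- The `q`-measure on cylinder sets: `μ_q(a + p^N ℤ_p) = (1+q)(-q)^a/(1+q^{p^N})`. -/
noncomputable def muQ (q : ℚ_[p]) (a N : ℕ) : ℚ_[p] :=
  (1 + q) * (-q) ^ a / (1 + q ^ p ^ N)


private lemma muQ_norm_q_eq_one (q : ℚ_[p]) (hq : ‖1 - q‖ < 1) : ‖q‖ = 1 := by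
  have h : q = 1 + (q - 1) := by ring
  rw [h, Padic.add_eq_max_of_ne, norm_one]
  · exact max_eq_left (by rw [norm_sub_rev]; exact hq.le)
  · rw [norm_one, norm_sub_rev]
    exact fun hc => absurd hc.symm hq.ne

private lemma muQ_norm_one_sub_pow (q : ℚ_[p]) (hq : ‖1 - q‖ < 1) (k : ℕ) :
    ‖1 - q ^ k‖ < 1 := by
  induction k with
  | zero => simpa using hq
  | succ k ih =>
    have h : 1 - q ^ (k + 1) = (1 - q ^ k) + q ^ k * (1 - q) := by ring
    rw [h]
    calc ‖(1 - q ^ k) + q ^ k * (1 - q)‖ ≤ max ‖1 - q ^ k‖ ‖q ^ k * (1 - q)‖ :=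
          Padic.nonarchimedean _ _
    _ < 1 := by
        rw [max_lt_iff]
        refine ⟨ih, ?_⟩
        rw [norm_mul, norm_pow, muQ_norm_q_eq_one p q hq, one_pow, one_mul]
        exact hq

private lemma muQ_one_add_ne (hp2 : p ≠ 2) (q : ℚ_[p]) (hq : ‖1 - q‖ < 1) (k : ℕ) :
    1 + q ^ k ≠ 0 := by
  intro h
  have hqk : q ^ k = -1 := by linear_combination h
  have h2 : ‖(1 - q ^ k)‖ < 1 := muQ_norm_one_sub_pow p q hq k
  rw [hqk] at h2
  have h3 : (1 : ℚ_[p]) - -1 = ((2 : ℤ) : ℚ_[p]) := by norm_num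
  rw [h3, Padic.norm_intCast_lt_one_iff] at h2
  have hd : p ∣ 2 := by exact_mod_cast h2
  exact hp2 ((Nat.prime_dvd_prime_iff_eq Fact.out Nat.prime_two).mp hd)

/-- For an odd prime `p` and `q` with `‖1-q‖ < 1`, the assignment
`μ_q(a + p^N ℤ_p) = (1+q)(-q)^a/(1+q^{p^N})` is finitely additive. -/
theorem muQ_additive (hp2 : p ≠ 2) (q : ℚ_[p]) (hq : ‖1 - q‖ < 1) :
    ∀ N a : ℕ, a < p ^ N →
      ∑ i ∈ range p, muQ p q (a + i * p ^ N) (N + 1) = muQ p q a N := by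
  intro N a _
  have hpodd : Odd p := (Fact.out : p.Prime).odd_of_ne_two hp2
  simp only [muQ]
  set Q := q ^ p ^ N with hQ
  have hQp : q ^ p ^ (N + 1) = Q ^ p := by rw [hQ, ← pow_mul, pow_succ]
  have hnQ : (-q) ^ p ^ N = -Q := by
    rw [neg_pow, (hpodd.pow).neg_one_pow, hQ, neg_one_mul]
  have h1 : 1 + Q ≠ 0 := muQ_one_add_ne p hp2 q hq _
  have h2 : 1 + Q ^ p ≠ 0 := by
    rw [hQ, ← pow_mul, ← pow_succ]; exact muQ_one_add_ne p hp2 q hq _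
  have hgeom : ∑ i ∈ range p, (-Q) ^ i = (1 + Q ^ p) / (1 + Q) := by
    have hne : -Q ≠ 1 := by
      intro h
      exact h1 (by linear_combination -h)
    rw [geom_sum_eq hne, hpodd.neg_pow,
      show -Q ^ p - 1 = -(1 + Q ^ p) by ring, show -Q - 1 = -(1 + Q) by ring, neg_div_neg_eq]
  calc ∑ i ∈ range p, (1 + q) * (-q) ^ (a + i * p ^ N) / (1 + q ^ p ^ (N + 1))
      = (1 + q) * (-q) ^ a / (1 + Q ^ p) * ∑ i ∈ range p, (-Q) ^ i := by
        rw [mul_sum]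
        refine Finset.sum_congr rfl fun i _ => ?_
        rw [hQp, pow_add, mul_comm i, pow_mul, hnQ]
        ring
    _ = (1 + q) * (-q) ^ a / (1 + Q) := by
        rw [hgeom]
        field_simp
end

section
/- For an odd prime p, q ∈ ℂ_p with |1-q|_p < 1, and any nonnegative integer m, the limit as N → ∞ of (1+q)/(1+q^{p^N}) · Σ_{x=0}^{p^N−1} ((1−q^x)/(1−q))^m (−q)^x exists in ℂ_p. -/
open Filter Topology Finset

variable (p : ℕ) [Fact p.Prime]

lemma aux_norm_le_one_of (q : ℚ_[p]) (hq : ‖1 - q‖ ≤ 1) : ‖q‖ ≤ 1 := by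
  calc ‖q‖ = ‖1 + (q - 1)‖ := congrArg norm (by ring)
  _ ≤ max ‖(1:ℚ_[p])‖ ‖q - 1‖ := Padic.nonarchimedean _ _
  _ ≤ 1 := max_le (by simp) (by rw [norm_sub_rev]; exact hq)

lemma aux_norm_one_sub_pow_le (q : ℚ_[p]) (hq : ‖1 - q‖ ≤ 1) (k : ℕ) : ‖1 - q ^ k‖ ≤ ‖1 - q‖ := by
  have hq1 : ‖q‖ ≤ 1 := aux_norm_le_one_of p q hq
  have h : 1 - q ^ k = (1 - q) * (∑ i ∈ range k, q ^ i) := by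
    have := geom_sum_mul q k; linear_combination this
  rw [h, norm_mul]
  have hs : ‖∑ i ∈ range k, q ^ i‖ ≤ 1 :=
    IsUltrametricDist.norm_sum_le_of_forall_le_of_nonneg zero_le_one
      (fun i _ => by simpa using pow_le_one₀ (norm_nonneg q) hq1)
  calc ‖1 - q‖ * ‖∑ i ∈ range k, q ^ i‖ ≤ ‖1 - q‖ * 1 :=
        mul_le_mul_of_nonneg_left hs (norm_nonneg _)
  _ = ‖1 - q‖ := mul_one _

lemma aux_step (q : ℚ_[p]) (hq : ‖1 - q‖ < 1) (a : ℚ_[p]) (ha : ‖1 - a‖ ≤ ‖1 - q‖) :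
    ‖1 - a ^ p‖ ≤ max ‖(p : ℚ_[p])‖ ‖1 - q‖ * ‖1 - a‖ := by
  have ha1 : ‖1 - a‖ ≤ 1 := ha.trans hq.le
  have h : 1 - a ^ p = (1 - a) * (∑ i ∈ range p, a ^ i) := by
    have := geom_sum_mul a p; linear_combination this
  rw [h, norm_mul, mul_comm]
  refine mul_le_mul_of_nonneg_right ?_ (norm_nonneg _)
  have hsum : (∑ i ∈ range p, a ^ i) = (∑ i ∈ range p, (a ^ i - 1)) + p := by
    rw [Finset.sum_sub_distrib]; simp
  rw [hsum]
  refine le_trans (Padic.nonarchimedean _ _) (max_le ?_ ?_)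
  · refine le_trans ?_ (le_max_right _ _)
    refine IsUltrametricDist.norm_sum_le_of_forall_le_of_nonneg
      (le_trans (norm_nonneg _) ha) (fun i _ => ?_)
    rw [norm_sub_rev]
    exact (aux_norm_one_sub_pow_le p a ha1 i).trans ha
  · exact le_max_left _ _

lemma aux_tendsto_pow_pow (q : ℚ_[p]) (hq : ‖1 - q‖ < 1) :
    Tendsto (fun N => q ^ p ^ N) atTop (𝓝 1) := by
  set c : ℝ := max ‖(p : ℚ_[p])‖ ‖1 - q‖ with hc
  have hc0 : 0 ≤ c := le_max_of_le_right (norm_nonneg _)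
  have hc1 : c < 1 := by
    refine max_lt ?_ hq
    rw [Padic.norm_p]
    have : (1:ℝ) < p := by exact_mod_cast (Fact.out : p.Prime).one_lt
    rw [inv_lt_one_iff₀]; right; exact this
  have key : ∀ N, ‖1 - q ^ p ^ N‖ ≤ c ^ N * ‖1 - q‖ := by
    intro N
    induction N with
    | zero => simp
    | succ n ih =>
      have hle : ‖1 - q ^ p ^ n‖ ≤ ‖1 - q‖ := by
        refine ih.trans ?_
        calc c ^ n * ‖1 - q‖ ≤ 1 * ‖1 - q‖ :=
          mul_le_mul_of_nonneg_right (pow_le_one₀ hc0 hc1.le) (norm_nonneg _)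
        _ = ‖1 - q‖ := one_mul _
      have := aux_step p q hq (q ^ p ^ n) hle
      rw [← pow_mul, ← pow_succ] at this
      calc ‖1 - q ^ p ^ (n+1)‖ ≤ c * ‖1 - q ^ p ^ n‖ := this
      _ ≤ c * (c ^ n * ‖1 - q‖) := mul_le_mul_of_nonneg_left ih hc0
      _ = c ^ (n+1) * ‖1 - q‖ := by ring
  rw [tendsto_iff_norm_sub_tendsto_zero]
  refine squeeze_zero (g := fun N => c ^ N * ‖1 - q‖) (fun N => norm_nonneg _)
    (fun N => ?_) ?_
  · rw [norm_sub_rev]; exact key N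
  · simpa using (tendsto_pow_atTop_nhds_zero_of_lt_one hc0 hc1).mul_const ‖1 - q‖

/-- The Riemann sums defining the Carlitz type `q`-Euler numbers converge in `ℂ_p`. -/
theorem carlitz_qEuler_limit_exists (hp2 : p ≠ 2) (q : ℚ_[p]) (hq : ‖1 - q‖ < 1) (m : ℕ) :
    ∃ L : ℚ_[p], Tendsto (fun N => (1 + q) / (1 + q ^ p ^ N) *
      ∑ x ∈ range (p ^ N), ((1 - q ^ x) / (1 - q)) ^ m * (-q) ^ x) atTop (𝓝 L) := by
  
  have hodd : Odd p := (Fact.out : p.Prime).odd_of_ne_two hp2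
  have hqk : ∀ k : ℕ, ‖1 - q ^ k‖ < 1 := fun k =>
    lt_of_le_of_lt (aux_norm_one_sub_pow_le p q hq.le k) hq
  have hne : ∀ k : ℕ, -(q ^ (k+1)) ≠ 1 := by
    intro k h
    have h2 : q ^ (k+1) = -1 := by linear_combination -h
    have hn : ‖((2:ℤ) : ℚ_[p])‖ < 1 := by
      have : ((2:ℤ) : ℚ_[p]) = 1 - q ^ (k+1) := by rw [h2]; push_cast; ring
      rw [this]; exact hqk (k+1)
    rw [Padic.norm_intCast_lt_one_iff] at hn
    rw [show ((2:ℤ)) = ((2:ℕ):ℤ) by norm_num, Int.natCast_dvd_natCast] at hn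
    exact hp2 ((Nat.prime_dvd_prime_iff_eq (Fact.out : p.Prime) Nat.prime_two).mp hn)
  -- per-N identity
  have hEq : (fun N => (1 + q) / (1 + q ^ p ^ N) *
      ∑ x ∈ range (p ^ N), ((1 - q ^ x) / (1 - q)) ^ m * (-q) ^ x)
      = fun N => (1 + q) / (1 + q ^ p ^ N) * (((1 - q) ^ m)⁻¹ *
        ∑ k ∈ range (m + 1), (-1 : ℚ_[p]) ^ k * (m.choose k : ℚ_[p]) *
          (((q ^ (k+1)) ^ p ^ N + 1) / (q ^ (k+1) + 1))) := by
    funext N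
    congr 1
    have hterm : ∀ x : ℕ, ((1 - q ^ x) / (1 - q)) ^ m * (-q) ^ x
        = ((1 - q) ^ m)⁻¹ * ∑ k ∈ range (m + 1),
            (-1 : ℚ_[p]) ^ k * (m.choose k : ℚ_[p]) * (-(q ^ (k+1))) ^ x := by
      intro x
      rw [div_pow, div_eq_mul_inv, mul_comm ((1 - q^x)^m), mul_assoc]
      congr 1
      have hexp : (1 - q ^ x) ^ m = ∑ k ∈ range (m + 1),
          (-1 : ℚ_[p]) ^ k * (m.choose k : ℚ_[p]) * (q ^ x) ^ k := by
        rw [sub_eq_neg_add, add_pow]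
        refine Finset.sum_congr rfl (fun k _ => ?_)
        rw [neg_pow]; ring
      rw [hexp, Finset.sum_mul]
      refine Finset.sum_congr rfl (fun k _ => ?_)
      have : (q ^ x) ^ k * (-q) ^ x = (-(q ^ (k+1))) ^ x := by
        rw [← pow_mul, neg_pow q, neg_pow (q ^ (k+1)), ← pow_mul]
        ring
      linear_combination ((-1:ℚ_[p])^k * (m.choose k : ℚ_[p])) * this
    rw [Finset.sum_congr rfl (fun x _ => hterm x), ← Finset.mul_sum]
    congr 1
    rw [Finset.sum_comm]
    refine Finset.sum_congr rfl (fun k _ => ?_)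
    rw [← Finset.mul_sum, geom_sum_eq (hne k)]
    have hoddpN : Odd (p ^ N) := hodd.pow
    rw [hoddpN.neg_pow]
    congr 1
    rw [div_eq_div_iff]
    · ring
    · intro h; apply hne k; linear_combination h
    · intro h; apply hne k; linear_combination -h
  rw [hEq]
  -- now the limit exists
  have h2 : Tendsto (fun N : ℕ => 1 + q ^ p ^ N) atTop (𝓝 ((1:ℚ_[p]) + 1)) :=
    (aux_tendsto_pow_pow p q hq).const_add 1
  have hsum : Tendsto (fun N => ∑ k ∈ range (m + 1),
      (-1 : ℚ_[p]) ^ k * (m.choose k : ℚ_[p]) * (((q ^ (k+1)) ^ p ^ N + 1) / (q ^ (k+1) + 1)))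
      atTop (𝓝 (∑ k ∈ range (m + 1),
      (-1 : ℚ_[p]) ^ k * (m.choose k : ℚ_[p]) * (((1:ℚ_[p]) + 1) / (q ^ (k+1) + 1)))) := by
    refine tendsto_finset_sum _ (fun k _ => ?_)
    exact Tendsto.const_mul _
      (Tendsto.div_const ((aux_tendsto_pow_pow p (q ^ (k+1)) (hqk (k+1))).add_const 1) _)
  exact ⟨_, Tendsto.mul (tendsto_const_nhds.div h2 (by norm_num)) (hsum.const_mul _)⟩
end

section
/- Multiplication (distribution) formula: for any positive odd integer m, x ∈ ℤ_p and k ∈ ℕ, ∫_{ℤ_p} q^{−t} ((1−q^{x+t})/(1−q))^k dμ_q(t) = ((1−q^m)/(1−q))^k · (1+q)/(1+q^m) · Σ_{i=0}^{m−1} (−1)^i ∫_{ℤ_p} ((1−q^{m(t+(x+i)/m)})/(1−q^m))^k q^{−mt} dμ_{q^m}(t). -/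
open Filter Topology Finset

variable (p : ℕ) [Fact p.Prime]

/-!
Expanding `((1 - q^{x+t})/(1 - q))^k` binomially turns the Riemann sums of `E_{k,q}(x)` into
combinations of the alternating geometric sums `∑_{t < p^N} (-q^j)^t = (1 + q^{j p^N})/(1 + q^j)`
(`p^N` is odd), and `q^{p^N} → 1` gives the closed form
`E_{k,q}(x) = (1 + q)/(1 - q)^k ∑_{j ≤ k} (-1)^j C(k,j) q^{jx}/(1 + q^j)`.
For odd `m` the same alternating geometric sum, now over `i < m`, collapses
`∑_{i<m} (-1)^i E_{k,q^m}((x+i)/m)` to the closed form for `q`. Since `p` is odd, `1 + q^j ≡ 2 (mod p)`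
never vanishes, and lifting the exponent in `ℤ_p` shows `q^m ≠ 1` unless `q = 1`.
-/

theorem Odd.geom_sum_neg_mul_one_add {R : Type*} [CommRing R] {n : ℕ} (hn : Odd n) (r : R) :
    (∑ i ∈ range n, (-r) ^ i) * (1 + r) = 1 + r ^ n := by
  have h := geom_sum_mul (-r) n
  rw [hn.neg_pow] at h
  linear_combination -h

theorem one_sub_pow_eq_sum {R : Type*} [CommRing R] (a : R) (k : ℕ) :
    (1 - a) ^ k = ∑ j ∈ range (k + 1), (-1) ^ j * k.choose j * a ^ j := by
  rw [sub_eq_neg_add, add_pow]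
  refine sum_congr rfl fun j _ => ?_
  rw [neg_pow]
  ring

theorem one_add_pow_ne_zero_of_dvd_sub_one {R : Type*} [CommRing R] {a u : R} (hu : a ∣ u - 1)
    (h2 : ¬a ∣ 2) (j : ℕ) : 1 + u ^ j ≠ 0 := by
  intro h
  apply h2
  have hj : a ∣ u ^ j - 1 := hu.trans (sub_one_dvd_pow_sub_one u j)
  rw [show (2 : R) = 1 + u ^ j - (u ^ j - 1) by ring, h, zero_sub, dvd_neg]
  exact hj

section Field

variable {K : Type*} [Field K]

theorem sum_range_neg_one_pow_mul_sum_pow (c : ℕ → K) (d : ℕ) {q : K}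
    (hq : ∀ j < d, 1 + q ^ j ≠ 0) (y : K) {n : ℕ} (hn : Odd n) :
    ∑ i ∈ range n, (-1) ^ i * ∑ j ∈ range d, c j * (y * q ^ i) ^ j =
      ∑ j ∈ range d, c j * y ^ j * ((1 + (q ^ j) ^ n) / (1 + q ^ j)) := by
  simp_rw [mul_sum]
  rw [sum_comm]
  refine sum_congr rfl fun j hj => ?_
  rw [← hn.geom_sum_neg_mul_one_add, mul_div_cancel_right₀ _ (hq j (mem_range.mp hj)), mul_sum]
  refine sum_congr rfl fun i _ => ?_
  rw [mul_pow, ← pow_mul, pow_mul', neg_pow (q ^ j)]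
  ring

def qEulerBinomSum (q : K) (k : ℕ) (y : K) : K :=
  ∑ j ∈ range (k + 1), (-1) ^ j * k.choose j / (1 + q ^ j) * y ^ j

theorem sum_range_neg_one_pow_mul_qEulerBinomSum {q : K} (hq : ∀ j, 1 + q ^ j ≠ 0) {m : ℕ}
    (hm : Odd m) (k : ℕ) (y : K) :
    ∑ i ∈ range m, (-1) ^ i * qEulerBinomSum (q ^ m) k (y * q ^ i) = qEulerBinomSum q k y := by
  unfold qEulerBinomSum
  rw [sum_range_neg_one_pow_mul_sum_pow (fun j => (-1) ^ j * k.choose j / (1 + (q ^ m) ^ j)) _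
    (fun j _ => hq j) y hm]
  refine sum_congr rfl fun j _ => ?_
  rw [← pow_mul, ← pow_mul, mul_comm m j]
  field_simp [hq j, hq (j * m)]

theorem sum_range_qEulerPoly_summand {q : K} (hq0 : q ≠ 0) (hq : ∀ j, 1 + q ^ j ≠ 0) (k : ℕ)
    (y : K) {P : ℕ} (hP : Odd P) :
    ∑ t ∈ range P, (q ^ t)⁻¹ * ((1 - y * q ^ t) / (1 - q)) ^ k * (-q) ^ t =
      ((1 - q) ^ k)⁻¹ * ∑ j ∈ range (k + 1),
        (-1) ^ j * k.choose j * y ^ j * ((1 + (q ^ j) ^ P) / (1 + q ^ j)) := by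
  have hsummand : ∀ t, (q ^ t)⁻¹ * ((1 - y * q ^ t) / (1 - q)) ^ k * (-q) ^ t =
      ((1 - q) ^ k)⁻¹ * ((-1) ^ t *
        ∑ j ∈ range (k + 1), (-1) ^ j * k.choose j * (y * q ^ t) ^ j) := by
    intro t
    rw [div_pow, neg_pow q, one_sub_pow_eq_sum]
    field_simp [pow_ne_zero t hq0]
  rw [sum_congr rfl fun t _ => hsummand t, ← mul_sum,
    sum_range_neg_one_pow_mul_sum_pow _ _ (fun j _ => hq j) y hP]

end Field

namespace PadicInt

variable {p}

theorem not_dvd_two (hp2 : p ≠ 2) : ¬(p : ℤ_[p]) ∣ 2 := by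
  rw [← norm_lt_one_iff_dvd, ← Nat.cast_ofNat, norm_natCast_lt_one_iff]
  exact fun h => hp2 ((Nat.prime_dvd_prime_iff_eq Fact.out Nat.prime_two).mp h)

theorem eq_one_of_pow_eq_one (hp2 : p ≠ 2) {u : ℤ_[p]} (hu : (p : ℤ_[p]) ∣ u - 1) {m : ℕ}
    (hm : m ≠ 0) (h : u ^ m = 1) : u = 1 := by
  have hp : p.Prime := Fact.out
  obtain ⟨a, b, hb, rfl⟩ := Nat.exists_eq_pow_mul_and_not_dvd hm p hp.ne_one
  have hb' : ¬(p : ℤ_[p]) ∣ b := by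
    rwa [← norm_lt_one_iff_dvd, norm_natCast_lt_one_iff]
  have hpu : ¬(p : ℤ_[p]) ∣ u := fun hpu =>
    prime_p.not_dvd_one (by simpa using dvd_sub hpu hu)
  have hpow : (p : ℤ_[p]) ∣ u ^ p ^ a - 1 := hu.trans (sub_one_dvd_pow_sub_one u _)
  have hlte : emultiplicity (p : ℤ_[p]) (u ^ p ^ a - 1) =
      emultiplicity (p : ℤ_[p]) (u - 1) + a := by
    simpa using emultiplicity_pow_prime_pow_sub_pow_prime_pow prime_p (hp.odd_of_ne_two hp2)
      (y := 1) (by simpa using hu) hpu a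
  have htop : (⊤ : ℕ∞) = emultiplicity (p : ℤ_[p]) (u - 1) + a := by
    have hcoprime := emultiplicity_pow_sub_pow_of_prime prime_p (by simpa using hpow)
      (fun h => hpu (prime_p.dvd_of_dvd_pow h)) hb'
    rwa [one_pow, ← pow_mul, h, sub_self, emultiplicity_zero, hlte] at hcoprime
  rw [eq_comm, ENat.add_eq_top, or_iff_left (ENat.natCast_ne_top a), emultiplicity_eq_top] at htop
  by_contra hne
  exact htop (.of_prime_left prime_p (sub_ne_zero.mpr hne))

end PadicInt

namespace Padic

variable {p} {q : ℚ_[p]}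

theorem norm_one_sub_coe_lt_one_iff {u : ℤ_[p]} :
    ‖1 - (u : ℚ_[p])‖ < 1 ↔ (p : ℤ_[p]) ∣ u - 1 := by
  rw [← PadicInt.norm_lt_one_iff_dvd, norm_sub_rev, PadicInt.norm_def, PadicInt.coe_sub,
    PadicInt.coe_one]

theorem exists_padicInt_of_norm_one_sub_lt_one (hq : ‖1 - q‖ < 1) :
    ∃ u : ℤ_[p], (u : ℚ_[p]) = q := by
  refine ⟨⟨q, ?_⟩, rfl⟩
  calc ‖q‖ = ‖1 + (q - 1)‖ := by rw [add_sub_cancel]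
    _ ≤ max ‖(1 : ℚ_[p])‖ ‖q - 1‖ := IsUltrametricDist.norm_add_le_max _ _
    _ ≤ 1 := by rw [norm_one, norm_sub_rev]; exact max_le le_rfl hq.le

theorem norm_one_sub_pow_lt_one (hq : ‖1 - q‖ < 1) (m : ℕ) : ‖1 - q ^ m‖ < 1 := by
  obtain ⟨u, rfl⟩ := exists_padicInt_of_norm_one_sub_lt_one hq
  rw [norm_one_sub_coe_lt_one_iff] at hq
  exact_mod_cast norm_one_sub_coe_lt_one_iff.mpr (hq.trans (sub_one_dvd_pow_sub_one u m))

theorem one_add_pow_ne_zero (hp2 : p ≠ 2) (hq : ‖1 - q‖ < 1) (j : ℕ) : 1 + q ^ j ≠ 0 := by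
  obtain ⟨u, rfl⟩ := exists_padicInt_of_norm_one_sub_lt_one hq
  rw [norm_one_sub_coe_lt_one_iff] at hq
  exact_mod_cast PadicInt.coe_ne_zero.mpr
    (one_add_pow_ne_zero_of_dvd_sub_one hq (PadicInt.not_dvd_two hp2) j)

theorem eq_one_of_pow_eq_one (hp2 : p ≠ 2) (hq : ‖1 - q‖ < 1) {m : ℕ} (hm : m ≠ 0)
    (h : q ^ m = 1) : q = 1 := by
  obtain ⟨u, rfl⟩ := exists_padicInt_of_norm_one_sub_lt_one hq
  rw [norm_one_sub_coe_lt_one_iff] at hq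
  rw [PadicInt.eq_one_of_pow_eq_one hp2 hq hm (PadicInt.ext (by exact_mod_cast h)),
    PadicInt.coe_one]

theorem tendsto_pow_prime_pow_nhds_one (hq : ‖1 - q‖ < 1) :
    Tendsto (fun N => q ^ p ^ N) atTop (𝓝 1) := by
  obtain ⟨u, rfl⟩ := exists_padicInt_of_norm_one_sub_lt_one hq
  rw [norm_one_sub_coe_lt_one_iff] at hq
  have hle : ∀ N, ‖(u : ℚ_[p]) ^ p ^ N - 1‖ ≤ (p : ℝ)⁻¹ ^ (N + 1) := fun N => by
    have := dvd_sub_pow_of_dvd_sub hq N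
    rw [one_pow, ← Ideal.mem_span_singleton, ← PadicInt.norm_le_pow_iff_mem_span_pow] at this
    rwa [zpow_neg, zpow_natCast, ← inv_pow, PadicInt.norm_def] at this
  rw [tendsto_iff_norm_sub_tendsto_zero]
  refine squeeze_zero (fun N => norm_nonneg _) hle ?_
  exact (tendsto_pow_atTop_nhds_zero_of_lt_one (by positivity)
    (inv_lt_one_of_one_lt₀ (by exact_mod_cast (Fact.out : p.Prime).one_lt))).comp
    (tendsto_add_atTop_nat 1)

end Padic

section ClosedForm

variable {p}

theorem qEulerPoly_eq_qEulerBinomSum (hp2 : p ≠ 2) {q : ℚ_[p]} (hq : ‖1 - q‖ < 1) (k : ℕ)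
    (y : ℚ_[p]) : qEulerPoly p q k y = (1 + q) / (1 - q) ^ k * qEulerBinomSum q k y := by
  have hq0 : q ≠ 0 := by rintro rfl; simp at hq
  have hq1 := Padic.one_add_pow_ne_zero hp2 hq
  have hlim := Padic.tendsto_pow_prime_pow_nhds_one hq
  have hodd : ∀ N, Odd (p ^ N) := fun N => ((Fact.out : p.Prime).odd_of_ne_two hp2).pow
  have hsum : Tendsto (fun N => ∑ j ∈ range (k + 1),
      (-1) ^ j * k.choose j * y ^ j * ((1 + (q ^ j) ^ p ^ N) / (1 + q ^ j))) atTop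
      (𝓝 (∑ j ∈ range (k + 1), (-1) ^ j * k.choose j * y ^ j * ((1 + 1) / (1 + q ^ j)))) := by
    refine tendsto_finsetSum _ fun j _ => ((tendsto_const_nhds.add ?_).div_const _).const_mul _
    simpa [pow_right_comm q j] using hlim.pow j
  simp_rw [qEulerPoly, sum_range_qEulerPoly_summand hq0 hq1 k y (hodd _)]
  refine ((tendsto_const_nhds.div (tendsto_const_nhds.add hlim) (by norm_num)).mul
    (hsum.const_mul _)).limUnder_eq.trans ?_
  rw [qEulerBinomSum, mul_sum, mul_sum, mul_sum]
  refine sum_congr rfl fun j _ => ?_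
  ring

end ClosedForm

theorem qEulerPoly_multiplication (hp2 : p ≠ 2) (q : ℚ_[p]) (hq : ‖1 - q‖ < 1)
    (m : ℕ) (hm : Odd m) (x : ℤ_[p]) (k : ℕ) :
    qEulerPoly p q k (qpowZ p q x) =
      ((1 - q ^ m) / (1 - q)) ^ k * ((1 + q) / (1 + q ^ m)) *
        ∑ i ∈ range m, (-1 : ℚ_[p]) ^ i * qEulerPoly p (q ^ m) k (qpowZ p q x * q ^ i) := by
  have hq1 := Padic.one_add_pow_ne_zero hp2 hq
  simp_rw [qEulerPoly_eq_qEulerBinomSum hp2 (Padic.norm_one_sub_pow_lt_one hq m),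
    qEulerPoly_eq_qEulerBinomSum hp2 hq, mul_left_comm _ ((1 + q ^ m) / _), ← mul_sum,
    sum_range_neg_one_pow_mul_qEulerBinomSum hq1 hm]
  by_cases hq_one : q = 1
  · -- for `k > 0` both sides vanish through the junk value `x / 0 = 0`
    subst hq_one
    rcases k with _ | k <;> simp
  · have hqm_one : 1 - q ^ m ≠ 0 := fun h => hq_one <|
      Padic.eq_one_of_pow_eq_one hp2 hq hm.pos.ne' (sub_eq_zero.mp h).symm
    have h1q : 1 - q ≠ 0 := sub_ne_zero.mpr (Ne.symm hq_one)
    rw [div_pow]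
    field_simp [hq1 m]
end
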